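/- arXiv:0906.4536 — 2 statements merged into one kernel-verified Lean document; each statement's English description precedes it below -/
import Mathlib

section
/- For every integer m ≥ 1, the real number ρ_m := 1/(4cos²(π/(m+2))) is a root of T_m and every real root x of T_m satisfies x ≥ ρ_m; and the real number σ_{2m} := 1/(4cos²(π/(4m))) is a root of T̂_{2m} and every real root x of T̂_{2m} satisfies x ≥ σ_{2m}. In other words, ρ_m and σ_{2m} are the smallest roots of T_m and T̂_{2m} respectively. -/
/-!
Substituting `x = 1 / (4 cos² θ)` and rescaling by `(2 cos θ)ⁿ` turns the recursion of `T` into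
that of the Chebyshev polynomials `Sₙ(2 cos θ) = sin ((n+1)θ) / sin θ`, and `T̂` into
`Cₙ(2 cos θ) = 2 cos (nθ)`. Hence `T_m(1 / (4 cos² θ))` vanishes at `θ = π/(m+2)` and not on
`(0, π/(m+2))`, and `T̂_{2m}(1 / (4 cos² θ))` vanishes at `θ = π/(4m)` and not on `(0, π/(4m))`.
Since `θ ↦ 1 / (4 cos² θ)` increases from `1/4` on `[0, π/2)`, it remains to see that there are no
roots `x ≤ 1/4`, where the recursion keeps `Tₙ(x) > Tₙ₋₁(x)/2 > 0`.
-/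

/-- `Tnat` is the shifted recursion: `Tnat (m+1) = Tpoly m`. -/
noncomputable def Tnat : ℕ → Polynomial ℤ
  | 0 => 1
  | 1 => 1
  | (n + 2) => Tnat (n + 1) - Polynomial.X * Tnat n

/-- `Tpoly m = 1` for `m ≤ 0` and `Tpoly m = Tpoly (m-1) - X * Tpoly (m-2)` for `m ≥ 1`. -/
noncomputable def Tpoly (m : ℤ) : Polynomial ℤ := Tnat (m + 1).toNat

/-- `T̂_{2m} = T_{2m-1} - t·T_{2m-3}`, for `m ≥ 1`. -/
noncomputable def Thatpoly (m : ℤ) : Polynomial ℤ :=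
  Tpoly (2 * m - 1) - Polynomial.X * Tpoly (2 * m - 3)

open Polynomial Polynomial.Chebyshev Real Set

theorem Tpoly_natCast_add_one (k : ℕ) : Tpoly (k + 1) = Tnat (k + 2) := by
  rw [Tpoly, show ((k : ℤ) + 1 + 1).toNat = k + 2 by omega]

theorem Thatpoly_natCast_add_one (k : ℕ) :
    Thatpoly (k + 1) = Tnat (2 * k + 2) - X * Tnat (2 * k) := by
  rw [Thatpoly, Tpoly, Tpoly, show (2 * ((k : ℤ) + 1) - 1 + 1).toNat = 2 * k + 2 by omega,
    show (2 * ((k : ℤ) + 1) - 3 + 1).toNat = 2 * k by omega]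

section Chebyshev

variable {R : Type*} [CommRing R] {x y : R}

theorem aeval_Tnat_mul_pow_eq_eval_S (hxy : x * y ^ 2 = 1) (n : ℕ) :
    aeval x (Tnat n) * y ^ n = (S R n).eval y := by
  induction n using Nat.twoStepInduction with
  | zero => simp [Tnat]
  | one => simp [Tnat]
  | more n ih₀ ih₁ =>
    have hS := S_add_two R n
    push_cast at hS ih₁ ⊢
    rw [hS, Tnat]
    simp only [map_sub, map_mul, aeval_X, eval_sub, eval_mul, eval_X, ← ih₀, ← ih₁]
    linear_combination (-aeval x (Tnat n) * y ^ n) * hxy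

theorem aeval_Tnat_add_two_sub_X_mul_mul_pow (hxy : x * y ^ 2 = 1) (n : ℕ) :
    aeval x (Tnat (n + 2) - X * Tnat n) * y ^ (n + 2) = (Chebyshev.C R (n + 2)).eval y := by
  have hC : Chebyshev.C R (n + 2) = S R (n + 2) - S R n := by
    rw [C_eq_S_sub_X_mul_S, show (n : ℤ) + 2 - 1 = n + 1 by ring, S_add_two]
    ring
  have h₂ := aeval_Tnat_mul_pow_eq_eval_S hxy (n + 2)
  have h₀ := aeval_Tnat_mul_pow_eq_eval_S hxy n
  push_cast at h₂
  rw [hC, eval_sub, ← h₂, ← h₀, map_sub, map_mul, aeval_X]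
  linear_combination (-aeval x (Tnat n) * y ^ n) * hxy

end Chebyshev

noncomputable def quarterSecSq (θ : ℝ) : ℝ := 1 / (4 * cos θ ^ 2)

theorem quarterSecSq_mul_two_mul_cos_sq {θ : ℝ} (hθ : cos θ ≠ 0) :
    quarterSecSq θ * (2 * cos θ) ^ 2 = 1 := by
  unfold quarterSecSq
  field_simp
  ring

theorem aeval_Tnat_quarterSecSq_mul {θ : ℝ} (hθ : cos θ ≠ 0) (n : ℕ) :
    aeval (quarterSecSq θ) (Tnat n) * (2 * cos θ) ^ n * sin θ = sin ((n + 1) * θ) := by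
  rw [aeval_Tnat_mul_pow_eq_eval_S (quarterSecSq_mul_two_mul_cos_sq hθ),
    S_two_mul_real_cos, Int.cast_natCast]

theorem aeval_Tnat_add_two_sub_X_mul_quarterSecSq_mul {θ : ℝ} (hθ : cos θ ≠ 0) (n : ℕ) :
    aeval (quarterSecSq θ) (Tnat (n + 2) - X * Tnat n) * (2 * cos θ) ^ (n + 2)
      = 2 * cos ((n + 2) * θ) := by
  rw [aeval_Tnat_add_two_sub_X_mul_mul_pow (quarterSecSq_mul_two_mul_cos_sq hθ),
    C_two_mul_real_cos]
  push_cast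
  rfl

theorem strictMonoOn_quarterSecSq : StrictMonoOn quarterSecSq (Ico 0 (π / 2)) := by
  intro a ha b hb hab
  have hcos : cos b < cos a := cos_lt_cos_of_nonneg_of_le_pi ha.1 (by linarith [hb.2, pi_pos]) hab
  have hb0 : 0 < cos b := cos_pos_of_mem_Ioo ⟨by linarith [hb.1, pi_pos], hb.2⟩
  unfold quarterSecSq
  gcongr

theorem exists_quarterSecSq_eq {x : ℝ} (hx : 1 / 4 < x) :
    ∃ θ ∈ Ioo 0 (π / 2), quarterSecSq θ = x := by
  refine ⟨arctan √(4 * x - 1), ⟨arctan_pos.2 (sqrt_pos.2 (by linarith)),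
    arctan_lt_pi_div_two _⟩, ?_⟩
  rw [quarterSecSq, cos_arctan, div_pow, sq_sqrt (by positivity), sq_sqrt (by linarith)]
  field_simp
  ring

theorem aeval_Tnat_pos_and_lt_two_mul_succ {x : ℝ} (hx : x ≤ 1 / 4) (n : ℕ) :
    0 < aeval x (Tnat n) ∧ aeval x (Tnat n) < 2 * aeval x (Tnat (n + 1)) := by
  induction n with
  | zero => norm_num [Tnat]
  | succ n ih =>
    obtain ⟨hpos, hlt⟩ := ih
    refine ⟨by linarith, ?_⟩
    rw [Tnat, map_sub, map_mul, aeval_X]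
    nlinarith

theorem aeval_Tnat_pos {x : ℝ} (hx : x ≤ 1 / 4) (n : ℕ) : 0 < aeval x (Tnat n) :=
  (aeval_Tnat_pos_and_lt_two_mul_succ hx n).1

theorem aeval_Tnat_add_two_sub_X_mul_pos {x : ℝ} (hx : x ≤ 1 / 4) (n : ℕ) :
    0 < aeval x (Tnat (n + 2) - X * Tnat n) := by
  obtain ⟨hpos, hlt⟩ := aeval_Tnat_pos_and_lt_two_mul_succ hx n
  rw [Tnat, map_sub, map_sub, map_mul, aeval_X]
  nlinarith

theorem isLeast_quarterSecSq_of_ne_zero {P : ℝ → ℝ} {θ₀ : ℝ} (hθ₀ : θ₀ ∈ Ico 0 (π / 2))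
    (hroot : P (quarterSecSq θ₀) = 0) (hle : ∀ x ≤ 1 / 4, P x ≠ 0)
    (hlt : ∀ θ ∈ Ioo 0 θ₀, P (quarterSecSq θ) ≠ 0) :
    IsLeast {x | P x = 0} (quarterSecSq θ₀) := by
  refine ⟨hroot, fun x hx => ?_⟩
  by_contra! hxθ₀
  obtain hx4 | hx4 := le_or_gt x (1 / 4)
  · exact hle x hx4 hx
  obtain ⟨θ, hθ, rfl⟩ := exists_quarterSecSq_eq hx4
  have hθθ₀ : θ < θ₀ :=
    (strictMonoOn_quarterSecSq.lt_iff_lt ⟨hθ.1.le, hθ.2⟩ hθ₀).1 hxθ₀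
  exact hlt θ ⟨hθ.1, hθθ₀⟩ hx

theorem isLeast_roots_Tnat {n : ℕ} (hn : 1 ≤ n) :
    IsLeast {x : ℝ | aeval x (Tnat (n + 1)) = 0} (quarterSecSq (π / (n + 2))) := by
  have hn' : (2 : ℝ) < n + 2 := by
    have : (1 : ℝ) ≤ n := by exact_mod_cast hn
    linarith
  have hθ₀ : π / (n + 2) < π / 2 := div_lt_div_of_pos_left pi_pos two_pos hn'
  have hmul : ((n : ℝ) + 2) * (π / (n + 2)) = π := by field_simp
  have key : ∀ θ ∈ Ioo 0 (π / 2), aeval (quarterSecSq θ) (Tnat (n + 1)) = 0 ↔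
      sin ((n + 2) * θ) = 0 := by
    intro θ hθ
    have hcos : 0 < cos θ := cos_pos_of_mem_Ioo ⟨by linarith [hθ.1, pi_pos], hθ.2⟩
    have hsin : 0 < sin θ := sin_pos_of_pos_of_lt_pi hθ.1 (by linarith [hθ.2, pi_pos])
    have h := aeval_Tnat_quarterSecSq_mul hcos.ne' (n + 1)
    push_cast at h
    rw [add_assoc, one_add_one_eq_two] at h
    rw [← h]
    simp [hcos.ne', hsin.ne']
  have hθ₀pos : 0 < π / (n + 2) := by positivity
  refine isLeast_quarterSecSq_of_ne_zero ⟨hθ₀pos.le, hθ₀⟩ ?_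
    (fun x hx => (aeval_Tnat_pos hx _).ne') fun θ hθ => ?_
  · rw [key _ ⟨hθ₀pos, hθ₀⟩, hmul, sin_pi]
  · rw [Ne, key _ ⟨hθ.1, hθ.2.trans hθ₀⟩]
    refine (sin_pos_of_pos_of_lt_pi (by nlinarith [hθ.1]) ?_).ne'
    calc ((n : ℝ) + 2) * θ < (n + 2) * (π / (n + 2)) := by gcongr; exact hθ.2
      _ = π := hmul

theorem isLeast_roots_Tnat_add_two_sub_X_mul (n : ℕ) :
    IsLeast {x : ℝ | aeval x (Tnat (n + 2) - X * Tnat n) = 0}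
      (quarterSecSq (π / (2 * (n + 2)))) := by
  have hθ₀ : π / (2 * (n + 2)) < π / 2 :=
    div_lt_div_of_pos_left pi_pos two_pos (by linarith [(n.cast_nonneg : (0 : ℝ) ≤ n)])
  have hmul : ((n : ℝ) + 2) * (π / (2 * (n + 2))) = π / 2 := by field_simp
  have key : ∀ θ ∈ Ioo 0 (π / 2), aeval (quarterSecSq θ) (Tnat (n + 2) - X * Tnat n) = 0 ↔
      cos ((n + 2) * θ) = 0 := by
    intro θ hθ
    have hcos : 0 < cos θ := cos_pos_of_mem_Ioo ⟨by linarith [hθ.1, pi_pos], hθ.2⟩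
    rw [iff_comm, ← mul_eq_zero_iff_left (two_ne_zero' ℝ),
      ← aeval_Tnat_add_two_sub_X_mul_quarterSecSq_mul hcos.ne']
    simp [hcos.ne']
  have hθ₀pos : 0 < π / (2 * (n + 2)) := by positivity
  refine isLeast_quarterSecSq_of_ne_zero ⟨hθ₀pos.le, hθ₀⟩ ?_
    (fun x hx => (aeval_Tnat_add_two_sub_X_mul_pos hx _).ne') fun θ hθ => ?_
  · rw [key _ ⟨hθ₀pos, hθ₀⟩, hmul, cos_pi_div_two]
  · rw [Ne, key _ ⟨hθ.1, hθ.2.trans hθ₀⟩]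
    refine (cos_pos_of_mem_Ioo ⟨by nlinarith [hθ.1, pi_pos], ?_⟩).ne'
    calc ((n : ℝ) + 2) * θ < (n + 2) * (π / (2 * (n + 2))) := by gcongr; exact hθ.2
      _ = π / 2 := hmul

theorem stmt4 (m : ℤ) (hm : 1 ≤ m) :
    (Polynomial.aeval (1 / (4 * Real.cos (Real.pi / ((m : ℝ) + 2)) ^ 2)) (Tpoly m) = 0 ∧
      ∀ x : ℝ, Polynomial.aeval x (Tpoly m) = 0 →
        1 / (4 * Real.cos (Real.pi / ((m : ℝ) + 2)) ^ 2) ≤ x) ∧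
    (Polynomial.aeval (1 / (4 * Real.cos (Real.pi / (4 * (m : ℝ))) ^ 2)) (Thatpoly m) = 0 ∧
      ∀ x : ℝ, Polynomial.aeval x (Thatpoly m) = 0 →
        1 / (4 * Real.cos (Real.pi / (4 * (m : ℝ))) ^ 2) ≤ x) := by
  obtain ⟨k, rfl⟩ : ∃ k : ℕ, m = k + 1 := ⟨(m - 1).toNat, by omega⟩
  have hρ : (((k : ℤ) + 1 : ℤ) : ℝ) + 2 = ((k + 1 : ℕ) : ℝ) + 2 := by push_cast; rfl
  have hσ : 4 * (((k : ℤ) + 1 : ℤ) : ℝ) = 2 * (((2 * k : ℕ) : ℝ) + 2) := by push_cast; ring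
  rw [Tpoly_natCast_add_one, Thatpoly_natCast_add_one, hρ, hσ]
  exact ⟨isLeast_roots_Tnat (by omega), isLeast_roots_Tnat_add_two_sub_X_mul (2 * k)⟩
end

section
/- For every integer k ≥ 1, the generating function ℋ_{C_k} of triangular-lattice directed animals over ℤ with compact source C_k = {0, 2, 4, …, 2k−2} satisfies ℋ_{C_k}(t) = 𝒜(t) · 𝒟(t)^{k−1} in ℤ[[t]]. -/
/-- A triangular-lattice directed animal over positions `Q ⊆ ℤ` with source `S`:
sites on line `0` are exactly the source, and every higher site is supported at
the left, at the right, or at the center (two lines below). -/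
def IsTriAnimal (Q : Set ℤ) (S : Finset ℤ) (A : Finset (ℤ × ℕ)) : Prop :=
  (∀ x ∈ A, x.1 ∈ Q) ∧
  (∀ q : ℤ, (q, 0) ∈ A ↔ q ∈ S) ∧
  ∀ x ∈ A, 1 ≤ x.2 →
    (x.1 - 1, x.2 - 1) ∈ A ∨ (x.1 + 1, x.2 - 1) ∈ A ∨ (2 ≤ x.2 ∧ (x.1, x.2 - 2) ∈ A)

/-- A square-lattice directed animal over positions `Q ⊆ ℤ` with source `S`. -/
def IsSqAnimal (Q : Set ℤ) (S : Finset ℤ) (A : Finset (ℤ × ℕ)) : Prop :=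
  (∀ x ∈ A, x.1 ∈ Q) ∧
  (∀ q : ℤ, (q, 0) ∈ A ↔ q ∈ S) ∧
  ∀ x ∈ A, 1 ≤ x.2 →
    (x.1 - 1, x.2 - 1) ∈ A ∨ (x.1 + 1, x.2 - 1) ∈ A

/-- Number of triangular-lattice directed animals over `Q` with source `S` and area `n`. -/
noncomputable def triCount (Q : Set ℤ) (S : Finset ℤ) (n : ℕ) : ℕ :=
  {A : Finset (ℤ × ℕ) | IsTriAnimal Q S A ∧ A.card = n}.ncard

/-- Number of square-lattice directed animals over `Q` with source `S` and area `n`. -/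
noncomputable def sqCount (Q : Set ℤ) (S : Finset ℤ) (n : ℕ) : ℕ :=
  {A : Finset (ℤ × ℕ) | IsSqAnimal Q S A ∧ A.card = n}.ncard

/-- Generating function of triangular-lattice directed animals over `Q` with source `S`. -/
noncomputable def triGF (Q : Set ℤ) (S : Finset ℤ) : PowerSeries ℤ :=
  PowerSeries.mk fun n => (triCount Q S n : ℤ)

/-- Generating function of square-lattice directed animals over `Q` with source `S`. -/
noncomputable def sqGF (Q : Set ℤ) (S : Finset ℤ) : PowerSeries ℤ :=
  PowerSeries.mk fun n => (sqCount Q S n : ℤ)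

/-!
Let the sources `S` be even with `max S = m - 2`. An animal with source `insert m S` splits into
its right part, the cells all of whose ancestors lie in columns `≥ m` (a half-animal once
translated by `-m`), and the rest; letting the rest fall as low as the support rule allows gives
an animal with source `S`. Conversely, an animal `B` with source `S` and a half-animal `D` placed
at column `m` recombine by letting `B` fall onto `D`. All cells have `q + ℓ` even, so a supported
cell lies exactly `gap` above its highest lower neighbour; hence letting the fallen cells fall
again onto the other part restores their levels, and the two maps are inverse bijections
preserving area. So `ℋ_{insert m S} = ℋ_S · 𝒟`, and the theorem follows by induction on `k`.
-/

theorem PowerSeries.mk_ncard_mul_mk_ncard {R α β : Type*} [CommSemiring R] (P : α → Prop)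
    (P' : β → Prop) (f : α → ℕ) (g : β → ℕ) (hP : ∀ n, {a | P a ∧ f a = n}.Finite)
    (hP' : ∀ n, {b | P' b ∧ g b = n}.Finite) :
    (mk fun n => ({a | P a ∧ f a = n}.ncard : R)) *
        mk (fun n => ({b | P' b ∧ g b = n}.ncard : R)) =
      mk fun n => ({x : α × β | P x.1 ∧ P' x.2 ∧ f x.1 + g x.2 = n}.ncard : R) := by
  classical
  ext n
  have hX : {x : α × β | P x.1 ∧ P' x.2 ∧ f x.1 + g x.2 = n} =
      ↑((Finset.HasAntidiagonal.antidiagonal n).biUnion fun p =>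
        (hP p.1).toFinset ×ˢ (hP' p.2).toFinset) := by
    ext ⟨a, b⟩
    simp
  rw [coeff_mul, coeff_mk, hX, Set.ncard_coe_finset, Finset.card_biUnion, Nat.cast_sum]
  · refine Finset.sum_congr rfl fun p _ => ?_
    rw [coeff_mk, coeff_mk, Finset.card_product, Nat.cast_mul,
      Set.ncard_eq_toFinset_card _ (hP _), Set.ncard_eq_toFinset_card _ (hP' _)]
  · intro p _ q _ hpq
    refine Finset.disjoint_left.2 fun x hp hq => hpq ?_
    simp only [Finset.mem_product, Set.Finite.mem_toFinset] at hp hq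
    exact Prod.ext (hp.1.2.symm.trans hq.1.2) (hp.2.2.symm.trans hq.2.2)

namespace TriAnimal

open Finset

abbrev Cell := ℤ × ℕ

/-- The level difference between a cell and a cell of column `y.1` supporting it: two for a
centre support, one for a left or right support. -/
def gap (x y : Cell) : ℕ := if x.1 = y.1 then 2 else 1

def EvenCell (x : Cell) : Prop := Even (x.1 + (x.2 : ℤ))

lemma one_le_gap (x y : Cell) : 1 ≤ gap x y := by
  unfold gap; split <;> omega

lemma gap_le_two (x y : Cell) : gap x y ≤ 2 := by
  unfold gap; split <;> omega

lemma add_gap_le {x y : Cell} (hx : EvenCell x) (hy : EvenCell y)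
    (hlt : y.2 < x.2) : y.2 + gap x y ≤ x.2 := by
  unfold gap
  split_ifs with hcol
  · obtain ⟨a, ha⟩ := hx
    obtain ⟨b, hb⟩ := hy
    omega
  · omega

lemma level_ne_of_ne {x y : Cell} (hx : EvenCell x) (hy : EvenCell y)
    (hxy : (x.1 - y.1).natAbs ≤ 1) (hne : x ≠ y) : x.2 ≠ y.2 := by
  intro hlev
  obtain ⟨a, ha⟩ := hx
  obtain ⟨b, hb⟩ := hy
  exact hne (Prod.ext (by omega) hlev)

def shift (t : ℤ) (A : Finset Cell) : Finset Cell :=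
  A.image fun x => (x.1 + t, x.2)

lemma card_shift (t : ℤ) (A : Finset Cell) : (shift t A).card = A.card :=
  card_image_of_injective _ fun x y h => by
    simp only [Prod.ext_iff] at h ⊢
    omega

lemma shift_shift (s t : ℤ) (A : Finset Cell) : shift s (shift t A) = shift (t + s) A := by
  simp only [shift, image_image, Function.comp_def, add_assoc]

lemma shift_zero (A : Finset Cell) : shift 0 A = A := by
  simp [shift]

def Step (A : Finset Cell) (y x : Cell) : Prop :=
  y ∈ A ∧ x ∈ A ∧ (x.1 - y.1).natAbs ≤ 1 ∧ y.2 < x.2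

def Reaches (A : Finset Cell) : Cell → Cell → Prop :=
  Relation.ReflTransGen (Step A)

lemma Step.mono {A A' : Finset Cell} (hAA' : A ⊆ A') {y x : Cell} (h : Step A y x) :
    Step A' y x :=
  ⟨hAA' h.1, hAA' h.2.1, h.2.2⟩

lemma Reaches.mono {A A' : Finset Cell} (hAA' : A ⊆ A') {y x : Cell} (h : Reaches A y x) :
    Reaches A' y x :=
  Relation.ReflTransGen.mono (fun _ _ => Step.mono hAA') _ _ h

lemma Reaches.eq_or_lt {A : Finset Cell} {y x : Cell} (h : Reaches A y x) :
    y = x ∨ y.2 < x.2 := by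
  induction h with
  | refl => exact Or.inl rfl
  | tail _ hstep ih => exact Or.inr (ih.elim (· ▸ hstep.2.2.2) (·.trans hstep.2.2.2))

section Animal

variable {Q : Set ℤ} {S : Finset ℤ} {A : Finset Cell}

lemma exists_support (hA : IsTriAnimal Q S A) {x : Cell} (hx : x ∈ A) (hl : 1 ≤ x.2) :
    ∃ s ∈ A, (x.1 - s.1).natAbs ≤ 1 ∧ s.2 < x.2 ∧ s.2 + gap x s = x.2 := by
  rcases hA.2.2 x hx hl with h | h | ⟨h2, h⟩ <;>
    refine ⟨_, h, ?_, ?_, ?_⟩ <;> dsimp only [gap] <;> (try split_ifs) <;> omega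

lemma supported_of_add_gap {x s : Cell} (hs : s ∈ A) (hxs : (x.1 - s.1).natAbs ≤ 1)
    (he : s.2 + gap x s = x.2) :
    (x.1 - 1, x.2 - 1) ∈ A ∨ (x.1 + 1, x.2 - 1) ∈ A ∨ (2 ≤ x.2 ∧ (x.1, x.2 - 2) ∈ A) := by
  obtain ⟨q, ℓ⟩ := s
  dsimp only [gap] at he hxs ⊢
  split_ifs at he with hcol
  · exact Or.inr (Or.inr ⟨by omega, by convert hs using 2; omega⟩)
  · rcases (by omega : q = x.1 - 1 ∨ q = x.1 + 1) with rfl | rfl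
    · exact Or.inl (by convert hs using 2; omega)
    · exact Or.inr (Or.inl (by convert hs using 2; omega))

lemma mem_source_of_level_eq_zero (hA : IsTriAnimal Q S A) {x : Cell} (hx : x ∈ A)
    (h0 : x.2 = 0) : x.1 ∈ S :=
  (hA.2.1 x.1).1 (by rwa [← h0])

lemma evenCell_of_even_source (hA : IsTriAnimal Q S A) (hS : ∀ q ∈ S, Even q) :
    ∀ x ∈ A, EvenCell x := by
  intro x
  induction x using (measure (fun x : Cell => x.2)).wf.induction with
  | _ x ih =>
  intro hx
  rcases Nat.eq_zero_or_pos x.2 with h0 | hl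
  · simpa [EvenCell, h0] using hS _ (mem_source_of_level_eq_zero hA hx h0)
  · obtain ⟨s, hs, hxs, hlt, he⟩ := exists_support hA hx hl
    obtain ⟨a, ha⟩ := ih s hlt hs
    unfold gap at he
    split_ifs at he
    · exact ⟨a + 1, by omega⟩
    · rcases (by omega : x.1 = s.1 + 1 ∨ x.1 = s.1 - 1) with h | h
      · exact ⟨a + 1, by omega⟩
      · exact ⟨a, by omega⟩

lemma exists_source_reaches (hA : IsTriAnimal Q S A) {x : Cell} (hx : x ∈ A) :
    ∃ s ∈ A, s.2 = 0 ∧ Reaches A s x := by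
  induction x using (measure (fun x : Cell => x.2)).wf.induction with
  | _ x ih =>
  rcases Nat.eq_zero_or_pos x.2 with h0 | hl
  · exact ⟨x, hx, h0, .refl⟩
  · obtain ⟨s, hs, hxs, hlt, -⟩ := exists_support hA hx hl
    obtain ⟨s₀, hs₀, h0, hreach⟩ := ih s hlt hs
    exact ⟨s₀, hs₀, h0, hreach.tail ⟨hs, hx, hxs, hlt⟩⟩

lemma isTriAnimal_shift {a : ℤ} (t : ℤ) (hA : IsTriAnimal (Set.Ici a) S A) :
    IsTriAnimal (Set.Ici (a + t)) (S.image (· + t)) (shift t A) := by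
  unfold shift
  refine ⟨?_, fun q => ?_, ?_⟩
  · simp only [mem_image, Set.mem_Ici]
    rintro _ ⟨y, hy, rfl⟩
    have := hA.1 y hy
    simp only [Set.mem_Ici] at this
    omega
  · simp only [mem_image, Prod.ext_iff]
    constructor
    · rintro ⟨y, hy, h1, h2⟩
      exact ⟨y.1, mem_source_of_level_eq_zero hA hy h2, h1⟩
    · rintro ⟨r, hr, rfl⟩
      exact ⟨(r, 0), (hA.2.1 r).2 hr, rfl, rfl⟩
  · simp only [mem_image]
    rintro _ ⟨y, hy, rfl⟩ hl
    rcases hA.2.2 y hy hl with h | h | ⟨h2, h⟩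
    · exact Or.inl ⟨_, h, by simp; ring⟩
    · exact Or.inr (Or.inl ⟨_, h, by simp; ring⟩)
    · exact Or.inr (Or.inr ⟨h2, _, h, rfl⟩)

lemma level_le_two_mul_card (hA : IsTriAnimal Q S A) {x : Cell} (hx : x ∈ A) :
    x.2 ≤ 2 * A.card := by
  suffices key : ∀ x ∈ A, x.2 ≤ 2 * (A.filter fun y => y.2 < x.2).card from
    (key x hx).trans (Nat.mul_le_mul_left 2 (card_filter_le _ _))
  intro x
  induction x using (measure (fun x : Cell => x.2)).wf.induction with
  | _ x ih =>
  intro hx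
  rcases Nat.eq_zero_or_pos x.2 with h0 | hl
  · omega
  · obtain ⟨s, hs, -, hlt, he⟩ := exists_support hA hx hl
    have hsub : insert s (A.filter fun y => y.2 < s.2) ⊆ A.filter fun y => y.2 < x.2 := by
      refine insert_subset (mem_filter.2 ⟨hs, hlt⟩) fun y hy => ?_
      rw [mem_filter] at hy ⊢
      exact ⟨hy.1, hy.2.trans hlt⟩
    have hcard := card_le_card hsub
    rw [card_insert_of_notMem (by simp)] at hcard
    have := ih s hlt hs
    have := gap_le_two x s
    omega

lemma exists_source_near (hA : IsTriAnimal Q S A) {x : Cell} (hx : x ∈ A) :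
    ∃ s ∈ S, (x.1 - s).natAbs ≤ x.2 := by
  induction x using (measure (fun x : Cell => x.2)).wf.induction with
  | _ x ih =>
  rcases Nat.eq_zero_or_pos x.2 with h0 | hl
  · exact ⟨x.1, mem_source_of_level_eq_zero hA hx h0, by simp⟩
  · obtain ⟨s, hs, hxs, hlt, -⟩ := exists_support hA hx hl
    obtain ⟨q, hq, hsq⟩ := ih s hlt hs
    exact ⟨q, hq, by omega⟩

lemma finite_setOf_isTriAnimal (Q : Set ℤ) (S : Finset ℤ) (n : ℕ) :
    {A : Finset Cell | IsTriAnimal Q S A ∧ A.card = n}.Finite := by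
  refine (((S.biUnion fun s => Icc (s - 2 * n) (s + 2 * n)) ×ˢ range (2 * n + 1)).powerset
    |>.finite_toSet).subset ?_
  rintro A ⟨hA, rfl⟩
  rw [mem_coe, mem_powerset]
  intro x hx
  obtain ⟨s, hs, hxs⟩ := exists_source_near hA hx
  have := level_le_two_mul_card hA hx
  simp only [mem_product, mem_biUnion, mem_Icc, mem_range]
  exact ⟨⟨s, hs, by omega, by omega⟩, by omega⟩

end Animal

section Drop

variable {B V : Finset Cell}

/-- The cells of `B` fall onto the fixed cells `V`: `x` comes to rest `gap` above the highest of
its neighbours in `V` and of the (fallen) cells of `B` below it in neighbouring columns. -/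
noncomputable def dropLevel (B V : Finset Cell) : Cell → ℕ
  | x =>
    max ((B.filter fun y => (x.1 - y.1).natAbs ≤ 1 ∧ y.2 < x.2).attach.sup
          fun y => dropLevel B V y.1 + gap x y.1)
      ((V.filter fun z => (x.1 - z.1).natAbs ≤ 1).sup fun z => z.2 + gap x z)
  termination_by x => x.2
  decreasing_by exact (mem_filter.1 y.2).2.2

noncomputable def settle (B V : Finset Cell) : Finset Cell :=
  B.image fun x => (x.1, dropLevel B V x)

lemma mem_settle_of_mem {x : Cell} (hx : x ∈ B) : (x.1, dropLevel B V x) ∈ settle B V :=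
  mem_image_of_mem _ hx

lemma dropLevel_eq (x : Cell) :
    dropLevel B V x =
      max ((B.filter fun y => (x.1 - y.1).natAbs ≤ 1 ∧ y.2 < x.2).sup
            fun y => dropLevel B V y + gap x y)
        ((V.filter fun z => (x.1 - z.1).natAbs ≤ 1).sup fun z => z.2 + gap x z) := by
  rw [dropLevel, sup_attach _ fun y => dropLevel B V y + gap x y]

lemma add_gap_le_dropLevel {x y : Cell} (hy : y ∈ B) (hxy : (x.1 - y.1).natAbs ≤ 1)
    (hlt : y.2 < x.2) : dropLevel B V y + gap x y ≤ dropLevel B V x := by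
  rw [dropLevel_eq x]
  exact le_max_of_le_left
    (le_sup (f := fun y => dropLevel B V y + gap x y) (mem_filter.2 ⟨hy, hxy, hlt⟩))

lemma add_gap_le_dropLevel_of_mem_fixed {x z : Cell} (hz : z ∈ V)
    (hxz : (x.1 - z.1).natAbs ≤ 1) : z.2 + gap x z ≤ dropLevel B V x := by
  rw [dropLevel_eq x]
  exact le_max_of_le_right (le_sup (f := fun z => z.2 + gap x z) (mem_filter.2 ⟨hz, hxz⟩))

lemma dropLevel_lt_dropLevel {x y : Cell} (hy : y ∈ B) (hxy : (x.1 - y.1).natAbs ≤ 1)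
    (hlt : y.2 < x.2) : dropLevel B V y < dropLevel B V x :=
  (Nat.lt_add_of_pos_right (one_le_gap x y)).trans_le (add_gap_le_dropLevel hy hxy hlt)

lemma lt_dropLevel_of_mem_fixed {x z : Cell} (hz : z ∈ V) (hxz : (x.1 - z.1).natAbs ≤ 1) :
    z.2 < dropLevel B V x :=
  (Nat.lt_add_of_pos_right (one_le_gap x z)).trans_le
    (add_gap_le_dropLevel_of_mem_fixed hz hxz)

lemma dropLevel_eq_zero {x : Cell} (hV : ∀ z ∈ V, ¬(x.1 - z.1).natAbs ≤ 1) (h0 : x.2 = 0) :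
    dropLevel B V x = 0 := by
  rw [dropLevel_eq x, filter_false_of_mem (by omega), filter_false_of_mem hV]
  simp

lemma exists_add_gap_eq_dropLevel {x : Cell} (h : 1 ≤ dropLevel B V x) :
    (∃ y ∈ B, (x.1 - y.1).natAbs ≤ 1 ∧ dropLevel B V y + gap x y = dropLevel B V x) ∨
      ∃ z ∈ V, (x.1 - z.1).natAbs ≤ 1 ∧ z.2 + gap x z = dropLevel B V x := by
  rw [dropLevel_eq x] at h ⊢
  rcases max_choice (((B.filter fun y => (x.1 - y.1).natAbs ≤ 1 ∧ y.2 < x.2).sup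
      fun y => dropLevel B V y + gap x y))
      ((V.filter fun z => (x.1 - z.1).natAbs ≤ 1).sup fun z => z.2 + gap x z) with hm | hm <;>
    rw [hm] at h ⊢
  · obtain ⟨y₀, hy₀, -⟩ := Finset.lt_sup_iff.1 (show 0 < _ from h)
    obtain ⟨y, hy, hval⟩ := exists_mem_eq_sup _ ⟨y₀, hy₀⟩ fun y => dropLevel B V y + gap x y
    exact Or.inl ⟨y, (mem_filter.1 hy).1, (mem_filter.1 hy).2.1, hval.symm⟩
  · obtain ⟨z₀, hz₀, -⟩ := Finset.lt_sup_iff.1 (show 0 < _ from h)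
    obtain ⟨z, hz, hval⟩ := exists_mem_eq_sup _ ⟨z₀, hz₀⟩ fun z => z.2 + gap x z
    exact Or.inr ⟨z, (mem_filter.1 hz).1, (mem_filter.1 hz).2, hval.symm⟩

lemma dropLevel_lt_dropLevel_iff {x y : Cell} (hx : EvenCell x) (hy : EvenCell y) (hxB : x ∈ B)
    (hyB : y ∈ B) (hxy : (x.1 - y.1).natAbs ≤ 1) :
    dropLevel B V y < dropLevel B V x ↔ y.2 < x.2 := by
  refine ⟨fun h => ?_, dropLevel_lt_dropLevel hyB hxy⟩
  rcases lt_trichotomy y.2 x.2 with hlt | heq | hgt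
  · exact hlt
  · obtain rfl : x = y := by_contra fun hne => level_ne_of_ne hx hy hxy hne heq.symm
    exact absurd h (lt_irrefl _)
  · exact absurd (dropLevel_lt_dropLevel (V := V) hxB (by omega) hgt) (not_lt.2 h.le)

lemma card_settle : (settle B V).card = B.card := by
  refine card_image_of_injOn fun x hx y hy hxy => ?_
  simp only [Prod.ext_iff] at hxy
  rcases lt_trichotomy x.2 y.2 with hlt | heq | hgt
  · exact absurd hxy.2 (dropLevel_lt_dropLevel (V := V) (mem_coe.1 hx) (by omega) hlt).ne
  · exact Prod.ext hxy.1 heq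
  · exact absurd hxy.2 (dropLevel_lt_dropLevel (V := V) (mem_coe.1 hy) (by omega) hgt).ne'

lemma exists_support_settle {c : Cell} (hc : c ∈ settle B V) (hl : 1 ≤ c.2) :
    ∃ s ∈ settle B V ∪ V, (c.1 - s.1).natAbs ≤ 1 ∧ s.2 + gap c s = c.2 := by
  obtain ⟨x, -, rfl⟩ := mem_image.1 hc
  rcases exists_add_gap_eq_dropLevel hl with ⟨y, hy, hxy, he⟩ | ⟨z, hz, hxz, he⟩
  · exact ⟨_, mem_union_left _ (mem_settle_of_mem hy), hxy, he⟩
  · exact ⟨z, mem_union_right _ hz, hxz, he⟩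

lemma disjoint_settle : Disjoint V (settle B V) := by
  refine disjoint_right.2 fun c hc hcV => ?_
  obtain ⟨x, -, rfl⟩ := mem_image.1 hc
  exact lt_irrefl _ (lt_dropLevel_of_mem_fixed (x := x) hcV (by simp))

lemma reaches_settle {s x : Cell} (h : Reaches B s x) :
    Reaches (settle B V) (s.1, dropLevel B V s) (x.1, dropLevel B V x) := by
  induction h with
  | refl => exact .refl
  | tail _ hstep ih =>
    obtain ⟨hy, hx, hxy, hlt⟩ := hstep
    exact ih.tail ⟨mem_settle_of_mem hy, mem_settle_of_mem hx, hxy,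
      dropLevel_lt_dropLevel hy hxy hlt⟩

lemma mem_of_reaches_of_mem_fixed {y z : Cell} (h : Reaches (V ∪ settle B V) y z)
    (hz : z ∈ V) : y ∈ V := by
  induction h using Relation.ReflTransGen.head_induction_on with
  | refl => exact hz
  | head hstep _ ih =>
    obtain ⟨hy, -, hyz, hlt⟩ := hstep
    refine (mem_union.1 hy).resolve_right fun hyS => ?_
    obtain ⟨x, -, rfl⟩ := mem_image.1 hyS
    exact absurd hlt (lt_dropLevel_of_mem_fixed ih (by omega)).not_gt

/-- Among even cells, a supported cell lies exactly `gap` above its highest lower neighbour, so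
the levels of `B` are determined by the order of levels between neighbours, which
`dropLevel B V` preserves. -/
lemma dropLevel_settle {V' : Finset Cell}
    (hB : ∀ x ∈ B, EvenCell x) (hV' : ∀ z ∈ V', EvenCell z)
    (hsupp : ∀ x ∈ B, 1 ≤ x.2 → ∃ s ∈ B ∪ V', (x.1 - s.1).natAbs ≤ 1 ∧ s.2 + gap x s = x.2)
    (hbelow : ∀ x ∈ B, ∀ z ∈ V', (x.1 - z.1).natAbs ≤ 1 → z.2 < x.2) {x : Cell} (hx : x ∈ B) :
    dropLevel (settle B V) V' (x.1, dropLevel B V x) = x.2 := by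
  induction x using (measure (fun x : Cell => x.2)).wf.induction with
  | _ x ih =>
  refine le_antisymm ?_ ?_
  · rw [dropLevel_eq]
    refine max_le (Finset.sup_le fun c hc => ?_) (Finset.sup_le fun z hz => ?_)
    · obtain ⟨hcB, hxc, hlt⟩ := mem_filter.1 hc
      obtain ⟨y, hy, rfl⟩ := mem_image.1 hcB
      have hyx := (dropLevel_lt_dropLevel_iff (hB x hx) (hB y hy) hx hy hxc).1 hlt
      rw [ih y hyx hy]
      exact add_gap_le (hB x hx) (hB y hy) hyx
    · obtain ⟨hzV, hxz⟩ := mem_filter.1 hz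
      exact add_gap_le (hB x hx) (hV' z hzV) (hbelow x hx z hzV hxz)
  · rcases Nat.eq_zero_or_pos x.2 with h0 | hl
    · omega
    obtain ⟨s, hs, hxs, he⟩ := hsupp x hx hl
    rcases mem_union.1 hs with hsB | hsV
    · have hsx : s.2 < x.2 := by have := one_le_gap x s; omega
      have := add_gap_le_dropLevel (B := settle B V) (V := V') (x := (x.1, dropLevel B V x))
        (mem_settle_of_mem hsB) hxs (dropLevel_lt_dropLevel hsB hxs hsx)
      rw [ih s hsx hsB] at this
      exact he ▸ this
    · have := add_gap_le_dropLevel_of_mem_fixed (B := settle B V) (x := (x.1, dropLevel B V x))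
        hsV hxs
      exact he ▸ this

lemma settle_settle {V' : Finset Cell}
    (hB : ∀ x ∈ B, EvenCell x) (hV' : ∀ z ∈ V', EvenCell z)
    (hsupp : ∀ x ∈ B, 1 ≤ x.2 → ∃ s ∈ B ∪ V', (x.1 - s.1).natAbs ≤ 1 ∧ s.2 + gap x s = x.2)
    (hbelow : ∀ x ∈ B, ∀ z ∈ V', (x.1 - z.1).natAbs ≤ 1 → z.2 < x.2) :
    settle (settle B V) V' = B := by
  rw [settle, settle, image_image]
  conv_rhs => rw [← image_id (s := B)]
  exact image_congr fun x hx =>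
    Prod.ext rfl (dropLevel_settle hB hV' hsupp hbelow (mem_coe.1 hx))

end Drop

open Classical in
noncomputable def rightPart (A : Finset Cell) (m : ℤ) : Finset Cell :=
  A.filter fun x => ∀ y, Reaches A y x → m ≤ y.1

noncomputable def split (A : Finset Cell) (m : ℤ) : Finset Cell × Finset Cell :=
  (settle (A \ rightPart A m) ∅, shift (-m) (rightPart A m))

noncomputable def glue (B D : Finset Cell) (m : ℤ) : Finset Cell :=
  shift m D ∪ settle B (shift m D)

section RightPart

variable {A : Finset Cell} {m : ℤ}

lemma mem_rightPart {x : Cell} : x ∈ rightPart A m ↔ x ∈ A ∧ ∀ y, Reaches A y x → m ≤ y.1 := by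
  classical
  simp [rightPart]

lemma rightPart_subset : rightPart A m ⊆ A := fun _ hx => (mem_rightPart.1 hx).1

lemma le_of_mem_rightPart {x : Cell} (hx : x ∈ rightPart A m) : m ≤ x.1 :=
  (mem_rightPart.1 hx).2 x .refl

lemma mem_rightPart_of_reaches {x y : Cell} (hx : x ∈ rightPart A m) (hy : y ∈ A)
    (hyx : Reaches A y x) : y ∈ rightPart A m :=
  mem_rightPart.2 ⟨hy, fun z hzy => (mem_rightPart.1 hx).2 z (hzy.trans hyx)⟩

lemma mem_sdiff_rightPart {x : Cell} :
    x ∈ A \ rightPart A m ↔ x ∈ A ∧ ∃ y, Reaches A y x ∧ y.1 < m := by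
  simp only [mem_sdiff, mem_rightPart, not_and, not_forall, not_le, exists_prop]
  exact ⟨fun h => ⟨h.1, h.2 h.1⟩, fun h => ⟨h.1, fun _ => h.2⟩⟩

end RightPart

section Split

variable {S : Finset ℤ} {m : ℤ} {A : Finset Cell}

lemma evenCell_of_insert (hA : IsTriAnimal Set.univ (insert m S) A) (hS : ∀ q ∈ S, Even q)
    (hm : m - 2 ∈ S) : ∀ x ∈ A, EvenCell x :=
  evenCell_of_even_source hA <| forall_mem_insert _ _ _ |>.2
    ⟨by simpa using (hS _ hm).add even_two, hS⟩

lemma mk_zero_mem_rightPart_iff (hA : IsTriAnimal Set.univ (insert m S) A)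
    (hSm : ∀ q ∈ S, q ≤ m - 2) {q : ℤ} : (q, 0) ∈ rightPart A m ↔ q = m := by
  constructor
  · intro hq
    have := le_of_mem_rightPart hq
    rcases mem_insert.1 (mem_source_of_level_eq_zero hA (rightPart_subset hq) rfl) with h | h
    · exact h
    · have := hSm q h
      omega
  · rintro rfl
    refine mem_rightPart.2 ⟨(hA.2.1 _).2 (mem_insert_self _ _), fun y hy => ?_⟩
    rcases hy.eq_or_lt with rfl | h
    · exact le_rfl
    · exact absurd h (Nat.not_lt_zero _)

lemma isTriAnimal_rightPart (hA : IsTriAnimal Set.univ (insert m S) A)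
    (hSm : ∀ q ∈ S, q ≤ m - 2) : IsTriAnimal (Set.Ici m) {m} (rightPart A m) := by
  refine ⟨fun x hx => le_of_mem_rightPart hx,
    fun q => (mk_zero_mem_rightPart_iff hA hSm).trans mem_singleton.symm, fun x hx hl => ?_⟩
  obtain ⟨s, hs, hxs, hlt, he⟩ := exists_support hA (rightPart_subset hx) hl
  exact supported_of_add_gap
    (mem_rightPart_of_reaches hx hs (.single ⟨hs, rightPart_subset hx, hxs, hlt⟩)) hxs he

lemma isTriAnimal_split_snd (hA : IsTriAnimal Set.univ (insert m S) A)
    (hSm : ∀ q ∈ S, q ≤ m - 2) : IsTriAnimal (Set.Ici 0) {0} (split A m).2 := by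
  simpa [split] using isTriAnimal_shift (-m) (isTriAnimal_rightPart hA hSm)

lemma lt_level_of_mem_rightPart (hA : IsTriAnimal Set.univ (insert m S) A)
    (hS : ∀ q ∈ S, Even q) (hm : m - 2 ∈ S) {x z : Cell} (hx : x ∈ A \ rightPart A m)
    (hz : z ∈ rightPart A m) (hxz : (x.1 - z.1).natAbs ≤ 1) : z.2 < x.2 := by
  obtain ⟨hxA, hxR⟩ := mem_sdiff.1 hx
  have heven := evenCell_of_insert hA hS hm
  have hne := level_ne_of_ne (heven x hxA) (heven z (rightPart_subset hz)) hxz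
    (fun h => hxR (h ▸ hz))
  refine (Nat.lt_or_gt_of_ne hne).resolve_left fun hlt => hxR ?_
  exact mem_rightPart_of_reaches hz hxA (.single ⟨hxA, rightPart_subset hz, by omega, hlt⟩)

/-- The source `m - 2` holds up the cells of column `m - 1` whose supports all lie in the right
part. -/
lemma exists_lower_of_mem_sdiff_rightPart (hA : IsTriAnimal Set.univ (insert m S) A)
    (hm : m - 2 ∈ S) {x : Cell} (hx : x ∈ A \ rightPart A m) (hl : 1 ≤ x.2) :
    ∃ y ∈ A \ rightPart A m, (x.1 - y.1).natAbs ≤ 1 ∧ y.2 < x.2 := by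
  obtain ⟨hxA, y, hyx, hy⟩ := mem_sdiff_rightPart.1 hx
  rcases Relation.ReflTransGen.cases_tail hyx with rfl | ⟨c, hyc, hcx⟩
  · obtain ⟨s, hs, hxs, hlt, -⟩ := exists_support hA hxA hl
    by_cases hsm : s.1 < m
    · exact ⟨s, mem_sdiff_rightPart.2 ⟨hs, s, .refl, hsm⟩, hxs, hlt⟩
    · refine ⟨(m - 2, 0), mem_sdiff_rightPart.2 ⟨(hA.2.1 _).2 (mem_insert_of_mem hm), _, .refl,
        by simp⟩, by simp; omega, hl⟩
  · exact ⟨c, mem_sdiff_rightPart.2 ⟨hcx.1, y, hyc, hy⟩, hcx.2.2.1, hcx.2.2.2⟩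

lemma dropLevel_sdiff_rightPart_eq_zero_iff (hA : IsTriAnimal Set.univ (insert m S) A)
    (hm : m - 2 ∈ S) {x : Cell} (hx : x ∈ A \ rightPart A m) :
    dropLevel (A \ rightPart A m) ∅ x = 0 ↔ x.2 = 0 := by
  refine ⟨fun h => by_contra fun hl => ?_, dropLevel_eq_zero (by simp)⟩
  obtain ⟨y, hy, hxy, hlt⟩ := exists_lower_of_mem_sdiff_rightPart hA hm hx (by omega)
  exact absurd h (dropLevel_lt_dropLevel hy hxy hlt).ne_zero

lemma isTriAnimal_split_fst (hA : IsTriAnimal Set.univ (insert m S) A)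
    (hSm : ∀ q ∈ S, q ≤ m - 2) (hm : m - 2 ∈ S) : IsTriAnimal Set.univ S (split A m).1 := by
  refine ⟨fun _ _ => trivial, fun q => ?_, fun c hc hl => ?_⟩
  · simp only [split, settle, mem_image, Prod.ext_iff]
    constructor
    · rintro ⟨x, hx, rfl, h0⟩
      have hx0 := (dropLevel_sdiff_rightPart_eq_zero_iff hA hm hx).1 h0
      obtain ⟨hxA, hxR⟩ := mem_sdiff.1 hx
      refine (mem_insert.1 (mem_source_of_level_eq_zero hA hxA hx0)).resolve_left fun h => hxR ?_
      rw [show x = (m, 0) from Prod.ext h hx0]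
      exact (mk_zero_mem_rightPart_iff hA hSm).2 rfl
    · intro hq
      have hx : (q, 0) ∈ A \ rightPart A m := by
        refine mem_sdiff.2 ⟨(hA.2.1 q).2 (mem_insert_of_mem hq), fun h => ?_⟩
        have := (mk_zero_mem_rightPart_iff hA hSm).1 h
        have := hSm q hq
        omega
      exact ⟨(q, 0), hx, rfl, (dropLevel_sdiff_rightPart_eq_zero_iff hA hm hx).2 rfl⟩
  · obtain ⟨s, hs, hcs, he⟩ := exists_support_settle hc hl
    exact supported_of_add_gap (by simpa [split] using hs) hcs he

lemma card_split_fst_add_card_split_snd (A : Finset Cell) (m : ℤ) :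
    (split A m).1.card + (split A m).2.card = A.card := by
  rw [split, card_settle, card_shift, card_sdiff_add_card_eq_card rightPart_subset]

lemma glue_split (hA : IsTriAnimal Set.univ (insert m S) A) (hS : ∀ q ∈ S, Even q)
    (hm : m - 2 ∈ S) : glue (split A m).1 (split A m).2 m = A := by
  have heven := evenCell_of_insert hA hS hm
  rw [split, glue, shift_shift, neg_add_cancel, shift_zero,
    settle_settle (fun x hx => heven x (mem_sdiff.1 hx).1)
      (fun z hz => heven z (rightPart_subset hz)) (fun x hx hl => ?_)
      (fun x hx z hz => lt_level_of_mem_rightPart hA hS hm hx hz),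
    union_sdiff_of_subset rightPart_subset]
  obtain ⟨s, hs, hxs, -, he⟩ := exists_support hA (mem_sdiff.1 hx).1 hl
  exact ⟨s, by rwa [sdiff_union_of_subset rightPart_subset], hxs, he⟩

end Split

section Glue

variable {S : Finset ℤ} {m : ℤ} {B D : Finset Cell}

lemma card_glue (B D : Finset Cell) (m : ℤ) : (glue B D m).card = B.card + D.card := by
  rw [glue, card_union_of_disjoint disjoint_settle, card_settle, card_shift, add_comm]

lemma isTriAnimal_shift_half (hD : IsTriAnimal (Set.Ici 0) {0} D) :
    IsTriAnimal (Set.Ici m) {m} (shift m D) := by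
  simpa using isTriAnimal_shift m hD

lemma dropLevel_glue_eq_zero_iff (hB : IsTriAnimal Set.univ S B)
    (hD : IsTriAnimal (Set.Ici 0) {0} D) (hSm : ∀ q ∈ S, q ≤ m - 2) {x : Cell} (hx : x ∈ B) :
    dropLevel B (shift m D) x = 0 ↔ x.2 = 0 := by
  refine ⟨fun h => by_contra fun hl => ?_, fun h0 => dropLevel_eq_zero (fun z hz => ?_) h0⟩
  · obtain ⟨s, hs, hxs, hlt, -⟩ := exists_support hB hx (by omega)
    exact absurd h (dropLevel_lt_dropLevel hs hxs hlt).ne_zero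
  · have := hSm _ (mem_source_of_level_eq_zero hB hx h0)
    have : m ≤ z.1 := (isTriAnimal_shift_half hD).1 z hz
    omega

lemma isTriAnimal_glue (hB : IsTriAnimal Set.univ S B) (hD : IsTriAnimal (Set.Ici 0) {0} D)
    (hSm : ∀ q ∈ S, q ≤ m - 2) : IsTriAnimal Set.univ (insert m S) (glue B D m) := by
  have hW := isTriAnimal_shift_half (m := m) hD
  refine ⟨fun _ _ => trivial, fun q => ?_, fun c hc hl => ?_⟩
  · rw [glue, mem_union, hW.2.1, mem_singleton, mem_insert, settle, mem_image]
    refine or_congr_right ⟨?_, fun hq => ⟨(q, 0), (hB.2.1 q).2 hq,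
      Prod.ext rfl ((dropLevel_glue_eq_zero_iff hB hD hSm ((hB.2.1 q).2 hq)).2 rfl)⟩⟩
    rintro ⟨x, hx, hxq⟩
    simp only [Prod.ext_iff] at hxq
    rw [← hxq.1]
    exact mem_source_of_level_eq_zero hB hx ((dropLevel_glue_eq_zero_iff hB hD hSm hx).1 hxq.2)
  · rcases mem_union.1 hc with hcW | hcB
    · obtain ⟨s, hs, hcs, -, he⟩ := exists_support hW hcW hl
      exact supported_of_add_gap (mem_union_left _ hs) hcs he
    · obtain ⟨s, hs, hcs, he⟩ := exists_support_settle hcB hl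
      exact supported_of_add_gap (by rwa [glue, union_comm]) hcs he

lemma rightPart_glue (hB : IsTriAnimal Set.univ S B) (hD : IsTriAnimal (Set.Ici 0) {0} D)
    (hSm : ∀ q ∈ S, q ≤ m - 2) : rightPart (glue B D m) m = shift m D := by
  ext c
  rw [mem_rightPart]
  refine ⟨fun ⟨hc, hall⟩ => (mem_union.1 hc).resolve_right fun hcB => ?_, fun hc =>
    ⟨mem_union_left _ hc, fun y hy => (isTriAnimal_shift_half hD).1 y
      (mem_of_reaches_of_mem_fixed hy hc)⟩⟩
  obtain ⟨x, hx, rfl⟩ := mem_image.1 hcB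
  obtain ⟨s, hs, hs0, hsx⟩ := exists_source_reaches hB hx
  have := hall _ ((reaches_settle hsx).mono subset_union_right)
  have := hSm _ (mem_source_of_level_eq_zero hB hs hs0)
  omega

lemma split_glue (hB : IsTriAnimal Set.univ S B) (hD : IsTriAnimal (Set.Ici 0) {0} D)
    (hS : ∀ q ∈ S, Even q) (hSm : ∀ q ∈ S, q ≤ m - 2) : split (glue B D m) m = (B, D) := by
  rw [split, rightPart_glue hB hD hSm, shift_shift, add_neg_cancel, shift_zero, glue,
    union_sdiff_cancel_left disjoint_settle,
    settle_settle (evenCell_of_even_source hB hS) (by simp) (fun x hx hl => ?_) (by simp)]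
  obtain ⟨s, hs, hxs, -, he⟩ := exists_support hB hx hl
  exact ⟨s, by simpa using hs, hxs, he⟩

end Glue

theorem triGF_insert {S : Finset ℤ} {m : ℤ} (hS : ∀ q ∈ S, Even q) (hSm : ∀ q ∈ S, q ≤ m - 2)
    (hm : m - 2 ∈ S) :
    triGF Set.univ (insert m S) = triGF Set.univ S * triGF (Set.Ici 0) {0} := by
  simp only [triGF, triCount]
  rw [PowerSeries.mk_ncard_mul_mk_ncard _ _ _ _ (finite_setOf_isTriAnimal _ _)
    (finite_setOf_isTriAnimal _ _)]
  congr 2 with n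
  congr 1
  refine Set.ncard_congr (fun A _ => split A m) (fun A hA => ?_)
    (fun A A' hA hA' h => ?_) (fun P hP => ?_)
  · obtain ⟨hA, hn⟩ := hA
    exact ⟨isTriAnimal_split_fst hA hSm hm, isTriAnimal_split_snd hA hSm,
      (card_split_fst_add_card_split_snd A m).trans hn⟩
  · rw [← glue_split hA.1 hS hm, ← glue_split hA'.1 hS hm, h]
  · obtain ⟨hB, hD, hn⟩ := hP
    obtain ⟨B, D⟩ := P
    exact ⟨glue B D m, ⟨isTriAnimal_glue hB hD hSm, (card_glue B D m).trans hn⟩,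
      split_glue hB hD hS hSm⟩

end TriAnimal

theorem stmt14 (k : ℕ) (hk : 1 ≤ k) :
    triGF Set.univ ((Finset.range k).image fun i : ℕ => 2 * (i : ℤ))
      = triGF Set.univ {0} * triGF (Set.Ici 0) {0} ^ (k - 1) := by
  induction k, hk using Nat.le_induction with
  | base => simp
  | succ k hk ih =>
    rw [Finset.range_add_one, Finset.image_insert, TriAnimal.triGF_insert, ih, mul_assoc,
      ← pow_succ, Nat.sub_add_cancel hk, Nat.add_sub_cancel]
    · simp
    · simp only [Finset.mem_image, Finset.mem_range]
      omega
    · exact Finset.mem_image.2 ⟨k - 1, Finset.mem_range.2 (by omega), by omega⟩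
end
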